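/- arXiv:2408.06695 — 2 statements merged into one kernel-verified Lean document; each statement's English description precedes it below -/
import Mathlib

section
/- Steady-state trace identities: under the sensor setup and steady-state hypotheses, with S^f = Σ^f F^T P F Σ^f, it holds that Tr(Σ̄^t) = Tr(S^f Φ^t) + Tr(P Q) and Tr(Σ̄^f) = Tr(S^f Φ^f) + Tr(P Q^u). (Key identity proved in the paper's derivation of Theorem 9.) -/
/-!
Substituting the measurement update into the time update turns both the true and the nominal
covariance recursions into Lyapunov equations `X̄ = F̄ X̄ F̄ᵀ + C` for the closed-loop matrix
`F̄ = F Σᶠ (Σ̄ᶠ)⁻¹`; for the nominal one this needs the Riccati update in Joseph form. Pairing such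
an equation with the dual equation `P = F̄ᵀ P F̄ + I` under the trace gives `tr X̄ = tr (P C)`, and
cyclicity of the trace turns `tr (P F Σᶠ Φ Σᶠ Fᵀ)` into `tr (Sᶠ Φ)`.
-/

open Matrix

namespace Matrix

variable {ι R : Type*} [Fintype ι] [DecidableEq ι] [CommRing R]

theorem nonsing_inv_mul_mul_nonsing_inv (A : Matrix ι ι R) : A⁻¹ * A * A⁻¹ = A⁻¹ := by
  by_cases hA : IsUnit A.det
  · rw [nonsing_inv_mul A hA, Matrix.one_mul]
  · rw [nonsing_inv_apply_not_isUnit A hA, Matrix.mul_zero]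

/-- The Riccati measurement update `S = (S̄⁻¹ + Φ)⁻¹` in Joseph form. -/
theorem eq_mul_mul_transpose_add_of_eq_inv_add {S Sbar Φ : Matrix ι ι R}
    (hS : S.IsSymm) (hSbar : Sbar.IsSymm) (hupdate : S = (Sbar⁻¹ + Φ)⁻¹) :
    S = S * Sbar⁻¹ * Sbar * (S * Sbar⁻¹)ᵀ + S * Φ * S := by
  have hinv : (Sbar⁻¹)ᵀ = Sbar⁻¹ := by rw [transpose_nonsing_inv, hSbar]
  calc S = S * (Sbar⁻¹ + Φ) * S := by
        rw [hupdate, nonsing_inv_mul_mul_nonsing_inv]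
    _ = S * (Sbar⁻¹ * Sbar * Sbar⁻¹) * S + S * Φ * S := by
        rw [nonsing_inv_mul_mul_nonsing_inv, Matrix.mul_add, Matrix.add_mul]
    _ = S * Sbar⁻¹ * Sbar * (S * Sbar⁻¹)ᵀ + S * Φ * S := by
        rw [transpose_mul, hinv, hS.eq]; simp only [Matrix.mul_assoc]

theorem trace_eq_trace_mul_of_stein {A P X C : Matrix ι ι R}
    (hP : P = Aᵀ * P * A + 1) (hX : X = A * X * Aᵀ + C) :
    X.trace = (P * C).trace := by
  have hPX : (P * X).trace = (Aᵀ * P * A * X).trace + X.trace := by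
    nth_rw 1 [hP]; rw [Matrix.add_mul, Matrix.one_mul, trace_add]
  have hXP : (P * X).trace = (P * (A * X * Aᵀ)).trace + (P * C).trace := by
    nth_rw 1 [hX]; rw [Matrix.mul_add, trace_add]
  have hcyc : (Aᵀ * P * A * X).trace = (P * (A * X * Aᵀ)).trace := by
    rw [show Aᵀ * P * A * X = Aᵀ * (P * A * X) by simp only [Matrix.mul_assoc], trace_mul_comm]
    simp only [Matrix.mul_assoc]
  linear_combination hXP - hPX - hcyc

theorem trace_eq_of_filter_lyapunov {F A S Φ Q P X Xbar : Matrix ι ι R}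
    (hP : P = (F * A)ᵀ * P * (F * A) + 1) (hXbar : Xbar = F * X * Fᵀ + Q)
    (hX : X = A * Xbar * Aᵀ + S * Φ * S) :
    Xbar.trace = (S * Fᵀ * P * F * S * Φ).trace + (P * Q).trace := by
  have hclosed : Xbar = F * A * Xbar * (F * A)ᵀ + (F * (S * Φ * S) * Fᵀ + Q) := by
    nth_rw 1 [hXbar, hX]
    simp only [transpose_mul, Matrix.mul_add, Matrix.add_mul, Matrix.mul_assoc, add_assoc]
  rw [trace_eq_trace_mul_of_stein hP hclosed, Matrix.mul_add, trace_add]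
  congr 1
  simp only [← Matrix.mul_assoc]
  rw [trace_mul_cycle (P * F * S * Φ) S Fᵀ, trace_mul_cycle Fᵀ (P * F * S * Φ) S]
  simp only [Matrix.mul_assoc]

end Matrix

theorem stmt18_general {n : ℕ}
    (Phif Phit : Matrix (Fin n) (Fin n) ℝ)
    (F Q Qu : Matrix (Fin n) (Fin n) ℝ)
    (Sigf Sigfbar : Matrix (Fin n) (Fin n) ℝ)
    (hSigfsymm : Sigf.IsSymm) (hSigfbarsymm : Sigfbar.IsSymm)
    (hRic1 : Sigf = (Sigfbar⁻¹ + Phif)⁻¹)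
    (hRic2 : Sigfbar = F * Sigf * Fᵀ + Qu)
    (P : Matrix (Fin n) (Fin n) ℝ)
    (hP : P = (F * Sigf * Sigfbar⁻¹)ᵀ * P * (F * Sigf * Sigfbar⁻¹)
      + (1 : Matrix (Fin n) (Fin n) ℝ))
    (Sigt Sigtbar : Matrix (Fin n) (Fin n) ℝ)
    (hLy1 : Sigt = (Sigf * Sigfbar⁻¹) * Sigtbar * (Sigf * Sigfbar⁻¹)ᵀ
      + Sigf * Phit * Sigf)
    (hLy2 : Sigtbar = F * Sigt * Fᵀ + Q) :
    Sigtbar.trace = ((Sigf * Fᵀ * P * F * Sigf) * Phit).trace + (P * Q).trace ∧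
    Sigfbar.trace = ((Sigf * Fᵀ * P * F * Sigf) * Phif).trace + (P * Qu).trace := by
  rw [Matrix.mul_assoc F] at hP
  exact ⟨trace_eq_of_filter_lyapunov hP hLy2 hLy1,
    trace_eq_of_filter_lyapunov hP hRic2
      (eq_mul_mul_transpose_add_of_eq_inv_add hSigfsymm hSigfbarsymm hRic1)⟩

/-- Key identity in the paper's derivation of Theorem 9 (steady-state trace
identities): with `Sᶠ = Σᶠ Fᵀ P F Σᶠ`, one has
`Tr(Σ̄ᵗ) = Tr(Sᶠ Φᵗ) + Tr(P Q)` and `Tr(Σ̄ᶠ) = Tr(Sᶠ Φᶠ) + Tr(P Qᵘ)`. -/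
theorem stmt18 {n N : ℕ} (hn : 1 ≤ n) (hN : 1 ≤ N)
    (md : Fin N → ℕ) (hmd : ∀ j, 1 ≤ md j)
    (H : ∀ j, Matrix (Fin (md j)) (Fin n) ℝ)
    (R Ru : ∀ j, Matrix (Fin (md j)) (Fin (md j)) ℝ)
    (hRsymm : ∀ j, (R j).IsSymm) (hRusymm : ∀ j, (Ru j).IsSymm)
    (hR : ∀ j, (R j).PosDef) (hRu : ∀ j, (Ru j).PosDef)
    (a : Fin N → ℝ) (ha : ∀ j, 0 ≤ a j)
    (Phif Phit : Matrix (Fin n) (Fin n) ℝ)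
    (hPhif : Phif = ∑ j, a j • ((H j)ᵀ * (Ru j)⁻¹ * H j))
    (hPhit : Phit = ∑ j, (a j) ^ 2 • ((H j)ᵀ * (Ru j)⁻¹ * R j * (Ru j)⁻¹ * H j))
    (F Q Qu : Matrix (Fin n) (Fin n) ℝ)
    (hQsymm : Q.IsSymm) (hQusymm : Qu.IsSymm)
    (hQ : Q.PosDef) (hQu : Qu.PosDef)
    (Sigf Sigfbar : Matrix (Fin n) (Fin n) ℝ)
    (hSigfsymm : Sigf.IsSymm) (hSigfbarsymm : Sigfbar.IsSymm)
    (hSigf : Sigf.PosDef) (hSigfbar : Sigfbar.PosDef)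
    (hRic1 : Sigf = (Sigfbar⁻¹ + Phif)⁻¹)
    (hRic2 : Sigfbar = F * Sigf * Fᵀ + Qu)
    (hspec : ∀ μ ∈ spectrum ℂ ((F * Sigf * Sigfbar⁻¹).map Complex.ofReal),
      ‖μ‖ < 1)
    (P : Matrix (Fin n) (Fin n) ℝ) (hPsymm : P.IsSymm)
    (hP : P = (F * Sigf * Sigfbar⁻¹)ᵀ * P * (F * Sigf * Sigfbar⁻¹)
      + (1 : Matrix (Fin n) (Fin n) ℝ))
    (Sigt Sigtbar : Matrix (Fin n) (Fin n) ℝ)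
    (hSigtsymm : Sigt.IsSymm) (hSigtbarsymm : Sigtbar.IsSymm)
    (hLy1 : Sigt = (Sigf * Sigfbar⁻¹) * Sigtbar * (Sigf * Sigfbar⁻¹)ᵀ
      + Sigf * Phit * Sigf)
    (hLy2 : Sigtbar = F * Sigt * Fᵀ + Q) :
    Sigtbar.trace = ((Sigf * Fᵀ * P * F * Sigf) * Phit).trace + (P * Q).trace ∧
    Sigfbar.trace = ((Sigf * Fᵀ * P * F * Sigf) * Phif).trace + (P * Qu).trace :=
  stmt18_general Phif Phit F Q Qu Sigf Sigfbar hSigfsymm hSigfbarsymm hRic1 hRic2 P hP Sigt Sigtbar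
    hLy1 hLy2
end

section
/- Under the sensor setup and steady-state hypotheses, define S^f = Σ^f F^T P F Σ^f and ρ = Σ_{j=1}^N |a_j^2 − a_j| · ‖S^f‖_F · ‖H_j^T (R_j^u)^{-1} H_j‖_F + sqrt( Σ_{j=1}^N Σ_{k=1}^N a_j^2 a_k^2 ‖(R_j^u)^{-1} H_j S^f H_k^T (R_k^u)^{-1}‖_F^2 ) · sqrt( Σ_{j : a_j > 0} ‖ΔR_j‖_F^2 ) + ‖P‖_F · ‖ΔQ‖_F. Then max{0, Tr(Σ̄^f) − ρ} ≤ Tr(Σ̄^t) ≤ Tr(Σ̄^f) + ρ. (Theorem 9 of the paper: the trace of the steady-state estimation error covariance is bounded in terms of the Frobenius norms of the noise covariance deviations and the trace of the steady-state nominal performance evaluation index.) -/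
open Matrix

/-- Frobenius norm of a real matrix. -/
noncomputable def frob {α β : Type*} [Fintype α] [Fintype β] (A : Matrix α β ℝ) : ℝ :=
  Real.sqrt (∑ i, ∑ j, (A i j) ^ 2)

/-!
Both steady-state prior covariances solve Stein equations `X = F̄ X F̄ᵀ + U` with the same
closed-loop matrix `F̄ = F Σᶠ (Σ̄ᶠ)⁻¹`; for the nominal one this is the Riccati equation rewritten
with the gain identity `Σᶠ (Σ̄ᶠ)⁻¹ = I − Σᶠ Φᶠ`. Pairing with the dual equation `P = F̄ᵀ P F̄ + I`
gives `Tr X = Tr (U P)`, hence `Tr Σ̄ᵗ − Tr Σ̄ᶠ = Tr ((Φᵗ − Φᶠ) Sᶠ) − Tr (P ΔQ)`. Splitting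
`Φᵗ − Φᶠ` sensor by sensor and bounding every trace by `|Tr (A B)| ≤ ‖A‖_F ‖B‖_F` and the
Cauchy–Schwarz inequality gives `|Tr Σ̄ᵗ − Tr Σ̄ᶠ| ≤ ρ`.
-/

section Frobenius

variable {α β : Type*} [Fintype α] [Fintype β]

lemma frob_nonneg (A : Matrix α β ℝ) : 0 ≤ frob A :=
  Real.sqrt_nonneg _

lemma frob_sq (A : Matrix α β ℝ) : frob A ^ 2 = ∑ i, ∑ j, A i j ^ 2 :=
  Real.sq_sqrt (Finset.sum_nonneg fun _ _ => Finset.sum_nonneg fun _ _ => sq_nonneg _)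

lemma abs_trace_mul_le_frob_mul_frob (A : Matrix α β ℝ) (B : Matrix β α ℝ) :
    |(A * B).trace| ≤ frob A * frob B := by
  have htrace : (A * B).trace = ∑ p : α × β, A p.1 p.2 * B p.2 p.1 := by
    simp only [trace, diag, mul_apply, Fintype.sum_prod_type]
  have hA : ∑ p : α × β, A p.1 p.2 ^ 2 = frob A ^ 2 := by
    rw [frob_sq, Fintype.sum_prod_type]
  have hB : ∑ p : α × β, B p.2 p.1 ^ 2 = frob B ^ 2 := by
    rw [frob_sq, Fintype.sum_prod_type, Finset.sum_comm]
  rw [← Real.sqrt_sq (frob_nonneg A), ← Real.sqrt_sq (frob_nonneg B), ← Real.sqrt_mul (sq_nonneg _)]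
  refine Real.abs_le_sqrt ?_
  rw [htrace, ← hA, ← hB]
  exact Finset.sum_mul_sq_le_sq_mul_sq _ _ _

lemma abs_sum_mul_trace_mul_le {ι : Type*} [Fintype ι] (c : ι → ℝ) (M : ι → Matrix α β ℝ)
    (S : Matrix β α ℝ) :
    |∑ j, c j * (M j * S).trace| ≤ ∑ j, |c j| * frob S * frob (M j) := by
  refine (Finset.abs_sum_le_sum_abs _ _).trans (Finset.sum_le_sum fun j _ => ?_)
  rw [abs_mul, mul_assoc, mul_comm (frob S)]
  exact mul_le_mul_of_nonneg_left (abs_trace_mul_le_frob_mul_frob _ _) (abs_nonneg _)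

end Frobenius

section Stein

variable {n R : Type*} [Fintype n] [DecidableEq n] [CommRing R]

theorem trace_eq_trace_mul_of_stein {X U P F G : Matrix n n R}
    (hX : X = F * X * G + U) (hP : P = G * P * F + 1) : X.trace = (U * P).trace := by
  have hX' : X - F * X * G = U := sub_eq_of_eq_add' hX
  have hP' : P - G * P * F = 1 := sub_eq_of_eq_add' hP
  have hcycle : (X * (G * P * F)).trace = (F * X * G * P).trace := by
    rw [← Matrix.mul_assoc, trace_mul_comm]
    simp only [Matrix.mul_assoc]
  calc X.trace = (X * (P - G * P * F)).trace := by rw [hP', Matrix.mul_one]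
    _ = ((X - F * X * G) * P).trace := by
      rw [Matrix.mul_sub, Matrix.sub_mul, trace_sub, trace_sub, hcycle]
    _ = (U * P).trace := by rw [hX']

theorem mul_inv_eq_one_sub_of_eq_inv_add {S Sbar Φ : Matrix n n R} (hS : IsUnit S.det)
    (hric : S = (Sbar⁻¹ + Φ)⁻¹) : S * Sbar⁻¹ = 1 - S * Φ := by
  have hunit : IsUnit (Sbar⁻¹ + Φ).det := by
    rwa [← isUnit_nonsing_inv_det_iff, ← hric]
  have hone : S * (Sbar⁻¹ + Φ) = 1 := by
    rw [hric]
    exact nonsing_inv_mul _ hunit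
  rw [Matrix.mul_add] at hone
  exact eq_sub_of_add_eq hone

theorem stein_of_riccati {S Sbar Φ F Q : Matrix n n R} (hS : IsUnit S.det)
    (hSbar : IsUnit Sbar.det) (hSsymm : S.IsSymm) (hSbarsymm : Sbar.IsSymm)
    (hric₁ : S = (Sbar⁻¹ + Φ)⁻¹) (hric₂ : Sbar = F * S * Fᵀ + Q) :
    Sbar = (F * S * Sbar⁻¹) * Sbar * (F * S * Sbar⁻¹)ᵀ + (F * S * Φ * S * Fᵀ + Q) := by
  have hconj : (F * S * Sbar⁻¹) * Sbar * (F * S * Sbar⁻¹)ᵀ = F * (S * Sbar⁻¹ * S) * Fᵀ := by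
    rw [transpose_mul, transpose_mul, transpose_nonsing_inv, hSbarsymm.eq, hSsymm.eq,
      nonsing_inv_mul_cancel_right _ _ hSbar]
    simp only [Matrix.mul_assoc]
  rw [hconj, mul_inv_eq_one_sub_of_eq_inv_add hS hric₁]
  conv_lhs => rw [hric₂]
  noncomm_ring

theorem stein_of_lyapunov {X Xbar S Sbar Φ F Q : Matrix n n R}
    (hX : X = (S * Sbar⁻¹) * Xbar * (S * Sbar⁻¹)ᵀ + S * Φ * S) (hXbar : Xbar = F * X * Fᵀ + Q) :
    Xbar = (F * S * Sbar⁻¹) * Xbar * (F * S * Sbar⁻¹)ᵀ + (F * S * Φ * S * Fᵀ + Q) := by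
  conv_lhs => rw [hXbar, hX]
  simp only [transpose_mul]
  noncomm_ring

end Stein

theorem trace_conj_add_mul {n m R : Type*} [Fintype n] [Fintype m] [CommRing R]
    (F : Matrix n m R) (S Φ : Matrix m m R) (G : Matrix m n R) (Q P : Matrix n n R) :
    ((F * S * Φ * S * G + Q) * P).trace = (Φ * (S * G * P * F * S)).trace + (Q * P).trace := by
  have hcycle : (F * S * Φ * S * G * P).trace = (Φ * (S * G * P * F * S)).trace := by
    calc (F * S * Φ * S * G * P).trace = ((F * S) * (Φ * (S * G * P))).trace := by
          simp only [Matrix.mul_assoc]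
      _ = ((Φ * (S * G * P)) * (F * S)).trace := trace_mul_comm _ _
      _ = (Φ * (S * G * P * F * S)).trace := by simp only [Matrix.mul_assoc]
  rw [Matrix.add_mul, trace_add, hcycle]

theorem trace_info_mul_of_mismatch {m n R : Type*} [Fintype m] [Fintype n] [DecidableEq m]
    [CommRing R] (H : Matrix m n R) (Rt Ru : Matrix m m R) (S : Matrix n n R)
    (hRu : IsUnit Ru.det) :
    (Hᵀ * Ru⁻¹ * Rt * Ru⁻¹ * H * S).trace
      = (Hᵀ * Ru⁻¹ * H * S).trace - (Ru⁻¹ * H * S * Hᵀ * Ru⁻¹ * (Ru - Rt)).trace := by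
  have hcycle : (Hᵀ * Ru⁻¹ * (Ru - Rt) * Ru⁻¹ * H * S).trace
      = (Ru⁻¹ * H * S * Hᵀ * Ru⁻¹ * (Ru - Rt)).trace := by
    calc (Hᵀ * Ru⁻¹ * (Ru - Rt) * Ru⁻¹ * H * S).trace
        = ((Hᵀ * Ru⁻¹ * (Ru - Rt)) * (Ru⁻¹ * H * S)).trace := by simp only [Matrix.mul_assoc]
      _ = ((Ru⁻¹ * H * S) * (Hᵀ * Ru⁻¹ * (Ru - Rt))).trace := trace_mul_comm _ _
      _ = (Ru⁻¹ * H * S * Hᵀ * Ru⁻¹ * (Ru - Rt)).trace := by simp only [Matrix.mul_assoc]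
  rw [← hcycle, Matrix.mul_sub, Matrix.sub_mul, Matrix.sub_mul, Matrix.sub_mul,
    trace_sub, nonsing_inv_mul_cancel_right _ _ hRu, sub_sub_cancel]

section Fusion

variable {ι : Type*} [Fintype ι] {m : ι → Type*} [∀ j, Fintype (m j)]

theorem trace_fusion_sub_eq {n K : Type*} [Fintype n] [∀ j, DecidableEq (m j)] [CommRing K]
    (H : ∀ j, Matrix (m j) n K) (R Ru : ∀ j, Matrix (m j) (m j) K) (a : ι → K) (S : Matrix n n K)
    (hRu : ∀ j, IsUnit (Ru j).det) :
    ((∑ j, a j ^ 2 • ((H j)ᵀ * (Ru j)⁻¹ * R j * (Ru j)⁻¹ * H j)) * S).trace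
        - ((∑ j, a j • ((H j)ᵀ * (Ru j)⁻¹ * H j)) * S).trace
      = ∑ j, (a j ^ 2 - a j) * ((H j)ᵀ * (Ru j)⁻¹ * H j * S).trace
        - ∑ j, a j ^ 2 * ((Ru j)⁻¹ * H j * S * (H j)ᵀ * (Ru j)⁻¹ * (Ru j - R j)).trace := by
  simp only [Finset.sum_mul, trace_sum, Matrix.smul_mul, trace_smul, smul_eq_mul,
    trace_info_mul_of_mismatch _ _ _ _ (hRu _), ← Finset.sum_sub_distrib]
  exact Finset.sum_congr rfl fun j _ => by ring

theorem abs_sum_sq_mul_trace_le (a : ι → ℝ) (ha : ∀ j, 0 ≤ a j)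
    (K : ∀ j k, Matrix (m j) (m k) ℝ) (E : ∀ j, Matrix (m j) (m j) ℝ) :
    |∑ j, a j ^ 2 * (K j j * E j).trace|
      ≤ √(∑ j, ∑ k, a j ^ 2 * a k ^ 2 * frob (K j k) ^ 2)
        * √(∑ j ∈ Finset.univ.filter (fun j => 0 < a j), frob (E j) ^ 2) := by
  set s := Finset.univ.filter (fun j => 0 < a j)
  have hsupport : ∑ j, a j ^ 2 * (K j j * E j).trace = ∑ j ∈ s, a j ^ 2 * (K j j * E j).trace :=
    (Finset.sum_filter_of_ne fun j _ hj =>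
      (ha j).lt_of_ne fun h0 => hj (by rw [← h0]; ring)).symm
  have hdiag : ∑ j ∈ s, (a j ^ 2 * frob (K j j)) ^ 2
      ≤ ∑ j, ∑ k, a j ^ 2 * a k ^ 2 * frob (K j k) ^ 2 := by
    refine (Finset.sum_le_sum_of_subset_of_nonneg (Finset.filter_subset _ _)
      fun _ _ _ => sq_nonneg _).trans (Finset.sum_le_sum fun j _ => ?_)
    calc (a j ^ 2 * frob (K j j)) ^ 2 = a j ^ 2 * a j ^ 2 * frob (K j j) ^ 2 := by ring
      _ ≤ ∑ k, a j ^ 2 * a k ^ 2 * frob (K j k) ^ 2 :=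
        Finset.single_le_sum (f := fun k => a j ^ 2 * a k ^ 2 * frob (K j k) ^ 2)
          (fun _ _ => by positivity) (Finset.mem_univ j)
  calc |∑ j, a j ^ 2 * (K j j * E j).trace|
      = |∑ j ∈ s, a j ^ 2 * (K j j * E j).trace| := by rw [hsupport]
    _ ≤ ∑ j ∈ s, a j ^ 2 * frob (K j j) * frob (E j) := by
      refine (Finset.abs_sum_le_sum_abs _ _).trans (Finset.sum_le_sum fun j _ => ?_)
      rw [abs_mul, abs_of_nonneg (sq_nonneg _), mul_assoc]
      exact mul_le_mul_of_nonneg_left (abs_trace_mul_le_frob_mul_frob _ _) (sq_nonneg _)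
    _ ≤ √(∑ j ∈ s, (a j ^ 2 * frob (K j j)) ^ 2) * √(∑ j ∈ s, frob (E j) ^ 2) :=
      Real.sum_mul_le_sqrt_mul_sqrt _ _ _
    _ ≤ _ := mul_le_mul_of_nonneg_right (Real.sqrt_le_sqrt hdiag) (Real.sqrt_nonneg _)

theorem abs_trace_fusion_sub_le {n : Type*} [Fintype n] [∀ j, DecidableEq (m j)]
    (H : ∀ j, Matrix (m j) n ℝ) (R Ru : ∀ j, Matrix (m j) (m j) ℝ) (a : ι → ℝ)
    (ha : ∀ j, 0 ≤ a j) (S : Matrix n n ℝ) (hRu : ∀ j, IsUnit (Ru j).det) :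
    |((∑ j, a j ^ 2 • ((H j)ᵀ * (Ru j)⁻¹ * R j * (Ru j)⁻¹ * H j)) * S).trace
        - ((∑ j, a j • ((H j)ᵀ * (Ru j)⁻¹ * H j)) * S).trace|
      ≤ ∑ j, |a j ^ 2 - a j| * frob S * frob ((H j)ᵀ * (Ru j)⁻¹ * H j)
        + √(∑ j, ∑ k, a j ^ 2 * a k ^ 2 * frob ((Ru j)⁻¹ * H j * S * (H k)ᵀ * (Ru k)⁻¹) ^ 2)
          * √(∑ j ∈ Finset.univ.filter (fun j => 0 < a j), frob (Ru j - R j) ^ 2) := by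
  rw [trace_fusion_sub_eq H R Ru a S hRu]
  exact (abs_sub _ _).trans (add_le_add (abs_sum_mul_trace_mul_le _ _ _)
    (abs_sum_sq_mul_trace_le a ha (fun j k => (Ru j)⁻¹ * H j * S * (H k)ᵀ * (Ru k)⁻¹) _))

end Fusion

theorem stmt19_general {n N : ℕ}
    (md : Fin N → ℕ)
    (H : ∀ j, Matrix (Fin (md j)) (Fin n) ℝ)
    (R Ru : ∀ j, Matrix (Fin (md j)) (Fin (md j)) ℝ)
    (hRu : ∀ j, (Ru j).PosDef)
    (dR : ∀ j, Matrix (Fin (md j)) (Fin (md j)) ℝ)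
    (hdR : ∀ j, dR j = Ru j - R j)
    (a : Fin N → ℝ) (ha : ∀ j, 0 ≤ a j)
    (Phif Phit : Matrix (Fin n) (Fin n) ℝ)
    (hPhif : Phif = ∑ j, a j • ((H j)ᵀ * (Ru j)⁻¹ * H j))
    (hPhit : Phit = ∑ j, (a j) ^ 2 • ((H j)ᵀ * (Ru j)⁻¹ * R j * (Ru j)⁻¹ * H j))
    (F Q Qu dQ : Matrix (Fin n) (Fin n) ℝ)
    (hdQ : dQ = Qu - Q)
    (Sigf Sigfbar : Matrix (Fin n) (Fin n) ℝ)
    (hSigfsymm : Sigf.IsSymm) (hSigfbarsymm : Sigfbar.IsSymm)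
    (hSigf : Sigf.PosDef) (hSigfbar : Sigfbar.PosDef)
    (hRic1 : Sigf = (Sigfbar⁻¹ + Phif)⁻¹)
    (hRic2 : Sigfbar = F * Sigf * Fᵀ + Qu)
    (P : Matrix (Fin n) (Fin n) ℝ)
    (hP : P = (F * Sigf * Sigfbar⁻¹)ᵀ * P * (F * Sigf * Sigfbar⁻¹)
      + (1 : Matrix (Fin n) (Fin n) ℝ))
    (Sigt Sigtbar : Matrix (Fin n) (Fin n) ℝ)
    (hSigtbar : Sigtbar.PosSemidef)
    (hLy1 : Sigt = (Sigf * Sigfbar⁻¹) * Sigtbar * (Sigf * Sigfbar⁻¹)ᵀ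
      + Sigf * Phit * Sigf)
    (hLy2 : Sigtbar = F * Sigt * Fᵀ + Q)
    (Sf : Matrix (Fin n) (Fin n) ℝ) (hSf : Sf = Sigf * Fᵀ * P * F * Sigf)
    (ρ : ℝ)
    (hρ : ρ = (∑ j, |(a j) ^ 2 - a j| * frob Sf * frob ((H j)ᵀ * (Ru j)⁻¹ * H j))
      + Real.sqrt (∑ j, ∑ k,
          (a j) ^ 2 * (a k) ^ 2 * (frob ((Ru j)⁻¹ * H j * Sf * (H k)ᵀ * (Ru k)⁻¹)) ^ 2)
        * Real.sqrt (∑ j ∈ Finset.univ.filter (fun j => 0 < a j), (frob (dR j)) ^ 2)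
      + frob P * frob dQ) :
    max 0 (Sigfbar.trace - ρ) ≤ Sigtbar.trace ∧ Sigtbar.trace ≤ Sigfbar.trace + ρ := by
  have hRu_det : ∀ j, IsUnit (Ru j).det := fun j => (hRu j).det_pos.ne'.isUnit
  have hnominal := stein_of_riccati hSigf.det_pos.ne'.isUnit hSigfbar.det_pos.ne'.isUnit
    hSigfsymm hSigfbarsymm hRic1 hRic2
  have hactual := stein_of_lyapunov hLy1 hLy2
  have hgap : Sigtbar.trace - Sigfbar.trace
      = (Phit * Sf).trace - (Phif * Sf).trace - (P * dQ).trace := by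
    rw [trace_eq_trace_mul_of_stein hactual hP, trace_eq_trace_mul_of_stein hnominal hP,
      trace_conj_add_mul, trace_conj_add_mul, ← hSf, hdQ, trace_mul_comm P, Matrix.sub_mul,
      trace_sub]
    ring
  have habs : |Sigtbar.trace - Sigfbar.trace| ≤ ρ := by
    rw [hgap, hρ, hPhit, hPhif]
    simp only [hdR]
    exact (abs_sub _ _).trans (add_le_add (abs_trace_fusion_sub_le H R Ru a ha Sf hRu_det)
      (abs_trace_mul_le_frob_mul_frob P dQ))
  obtain ⟨hlower, hupper⟩ := abs_le.mp habs
  exact ⟨max_le hSigtbar.trace_nonneg (by linarith), by linarith⟩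

/-- Theorem 9 of the paper: with `Sᶠ = Σᶠ Fᵀ P F Σᶠ` and
`ρ = ∑ⱼ |aⱼ² − aⱼ| ‖Sᶠ‖_F ‖Hⱼᵀ (Rⱼᵘ)⁻¹ Hⱼ‖_F
  + sqrt(∑ⱼ ∑ₖ aⱼ² aₖ² ‖(Rⱼᵘ)⁻¹ Hⱼ Sᶠ Hₖᵀ (Rₖᵘ)⁻¹‖_F²) · sqrt(∑_{j : aⱼ>0} ‖ΔRⱼ‖_F²)
  + ‖P‖_F ‖ΔQ‖_F`,
one has `max{0, Tr(Σ̄ᶠ) − ρ} ≤ Tr(Σ̄ᵗ) ≤ Tr(Σ̄ᶠ) + ρ`. -/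
theorem stmt19 {n N : ℕ} (hn : 1 ≤ n) (hN : 1 ≤ N)
    (md : Fin N → ℕ) (hmd : ∀ j, 1 ≤ md j)
    (H : ∀ j, Matrix (Fin (md j)) (Fin n) ℝ)
    (R Ru : ∀ j, Matrix (Fin (md j)) (Fin (md j)) ℝ)
    (hRsymm : ∀ j, (R j).IsSymm) (hRusymm : ∀ j, (Ru j).IsSymm)
    (hR : ∀ j, (R j).PosDef) (hRu : ∀ j, (Ru j).PosDef)
    (dR : ∀ j, Matrix (Fin (md j)) (Fin (md j)) ℝ)
    (hdR : ∀ j, dR j = Ru j - R j)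
    (a : Fin N → ℝ) (ha : ∀ j, 0 ≤ a j)
    (Phif Phit : Matrix (Fin n) (Fin n) ℝ)
    (hPhif : Phif = ∑ j, a j • ((H j)ᵀ * (Ru j)⁻¹ * H j))
    (hPhit : Phit = ∑ j, (a j) ^ 2 • ((H j)ᵀ * (Ru j)⁻¹ * R j * (Ru j)⁻¹ * H j))
    (F Q Qu dQ : Matrix (Fin n) (Fin n) ℝ)
    (hQsymm : Q.IsSymm) (hQusymm : Qu.IsSymm)
    (hQ : Q.PosDef) (hQu : Qu.PosDef)
    (hdQ : dQ = Qu - Q)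
    (Sigf Sigfbar : Matrix (Fin n) (Fin n) ℝ)
    (hSigfsymm : Sigf.IsSymm) (hSigfbarsymm : Sigfbar.IsSymm)
    (hSigf : Sigf.PosDef) (hSigfbar : Sigfbar.PosDef)
    (hRic1 : Sigf = (Sigfbar⁻¹ + Phif)⁻¹)
    (hRic2 : Sigfbar = F * Sigf * Fᵀ + Qu)
    (hspec : ∀ μ ∈ spectrum ℂ ((F * Sigf * Sigfbar⁻¹).map Complex.ofReal),
      ‖μ‖ < 1)
    (P : Matrix (Fin n) (Fin n) ℝ) (hPsymm : P.IsSymm)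
    (hP : P = (F * Sigf * Sigfbar⁻¹)ᵀ * P * (F * Sigf * Sigfbar⁻¹)
      + (1 : Matrix (Fin n) (Fin n) ℝ))
    (Sigt Sigtbar : Matrix (Fin n) (Fin n) ℝ)
    (hSigt : Sigt.PosSemidef) (hSigtbar : Sigtbar.PosSemidef)
    (hLy1 : Sigt = (Sigf * Sigfbar⁻¹) * Sigtbar * (Sigf * Sigfbar⁻¹)ᵀ
      + Sigf * Phit * Sigf)
    (hLy2 : Sigtbar = F * Sigt * Fᵀ + Q)
    (Sf : Matrix (Fin n) (Fin n) ℝ) (hSf : Sf = Sigf * Fᵀ * P * F * Sigf)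
    (ρ : ℝ)
    (hρ : ρ = (∑ j, |(a j) ^ 2 - a j| * frob Sf * frob ((H j)ᵀ * (Ru j)⁻¹ * H j))
      + Real.sqrt (∑ j, ∑ k,
          (a j) ^ 2 * (a k) ^ 2 * (frob ((Ru j)⁻¹ * H j * Sf * (H k)ᵀ * (Ru k)⁻¹)) ^ 2)
        * Real.sqrt (∑ j ∈ Finset.univ.filter (fun j => 0 < a j), (frob (dR j)) ^ 2)
      + frob P * frob dQ) :
    max 0 (Sigfbar.trace - ρ) ≤ Sigtbar.trace ∧ Sigtbar.trace ≤ Sigfbar.trace + ρ :=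
  stmt19_general md H R Ru hRu dR hdR a ha Phif Phit hPhif hPhit F Q Qu dQ hdQ Sigf Sigfbar
    hSigfsymm hSigfbarsymm hSigf hSigfbar hRic1 hRic2 P hP Sigt Sigtbar hSigtbar hLy1 hLy2 Sf hSf ρ
    hρ
end
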